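/- Let m ≥ 1, let M, N ⊆ [m] with |M|+|N| ≥ 1, and let D = aΔ_M + cΔ_N ⊆ E^m. Then the linear left-E-code C^L_D has length |D| = 2^{|M|+|N|} and size |C^L_D| = 2^{2|M|}, and its Lee weight distribution is: the multiset {wt_Lee(c^L_D(v)) : v ∈ E^m} (with multiplicity, over all 2^{2m} elements v ∈ E^m) consists of the value 2^{|M|+|N|} with multiplicity 2^{2m-2|M|}(2^{|M|}-1)^2, the value 2^{|M|+|N|-1} with multiplicity 2^{2m-2|M|+1}(2^{|M|}-1), and the value 0 with multiplicity 2^{2m-2|M|}. -/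

import Mathlib

open Finset

/-- The simplicial complex `Δ_M ⊆ 𝔽₂^m` generated by `M ⊆ [m]`:
all vectors whose support is contained in `M`. -/
def deltaC {m : ℕ} (M : Finset (Fin m)) : Finset (Fin m → ZMod 2) :=
  Finset.univ.filter (fun w => ∀ i, w i ≠ 0 → i ∈ M)

/-- Dot product over `𝔽₂`. -/
def dotp {m : ℕ} (x y : Fin m → ZMod 2) : ZMod 2 := ∑ i, x i * y i

/-- The Gray map on a single element `a·s + c·t ↔ (s, t)` of `E = 𝔽₂ × 𝔽₂`:
`Φ(as + ct) = (t, s + t)`. -/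
def grayPair (e : ZMod 2 × ZMod 2) : Fin 2 → ZMod 2 := ![e.2, e.1 + e.2]

/-- The left codeword `c^L_D(v)` for `v = aα + cβ ↔ (α, β)`:
its coordinate at `d = (t₁, t₂) ∈ D` is `a(α·t₁) + c(β·t₁) ↔ (α·t₁, β·t₁)`. -/
def cwL {m : ℕ} (Ds : Finset ((Fin m → ZMod 2) × (Fin m → ZMod 2)))
    (v : (Fin m → ZMod 2) × (Fin m → ZMod 2)) :
    {d // d ∈ Ds} → ZMod 2 × ZMod 2 :=
  fun d => (dotp v.1 d.1.1, dotp v.2 d.1.1)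

/-- The Gray image `Φ(c^L_D(v)) ∈ 𝔽₂^{2|D|}` of the left codeword `c^L_D(v)`;
its Hamming weight (`hammingNorm`) is the Lee weight of `c^L_D(v)`. -/
def gcwL {m : ℕ} (Ds : Finset ((Fin m → ZMod 2) × (Fin m → ZMod 2)))
    (v : (Fin m → ZMod 2) × (Fin m → ZMod 2)) :
    {d // d ∈ Ds} × Fin 2 → ZMod 2 :=
  fun x => grayPair (cwL Ds v x.1) x.2

/-- The right codeword `c^R_D(v)` for `v = aα + cβ ↔ (α, β)`:
its coordinate at `d = (t₁, t₂) ∈ D` is `a(t₁·α) + c(t₂·α) ↔ (t₁·α, t₂·α)`. -/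
def cwR {m : ℕ} (Ds : Finset ((Fin m → ZMod 2) × (Fin m → ZMod 2)))
    (v : (Fin m → ZMod 2) × (Fin m → ZMod 2)) :
    {d // d ∈ Ds} → ZMod 2 × ZMod 2 :=
  fun d => (dotp d.1.1 v.1, dotp d.1.2 v.1)

/-- The Gray image `Φ(c^R_D(v)) ∈ 𝔽₂^{2|D|}` of the right codeword `c^R_D(v)`;
its Hamming weight (`hammingNorm`) is the Lee weight of `c^R_D(v)`. -/
def gcwR {m : ℕ} (Ds : Finset ((Fin m → ZMod 2) × (Fin m → ZMod 2)))
    (v : (Fin m → ZMod 2) × (Fin m → ZMod 2)) :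
    {d // d ∈ Ds} × Fin 2 → ZMod 2 :=
  fun x => grayPair (cwR Ds v x.1) x.2

/-!
Write `v = aα + cβ`. The Gray image of the coordinate of `c^L_D(v)` at `(t₁, t₂)` is
`(β·t₁, (α+β)·t₁)`, so the Lee weight is `2^|N|` times the number of `t₁ ∈ Δ_M` with `β·t₁ = 1`,
plus the same count for `α + β`. A linear functional on `Δ_M` that is nonzero takes the value `1`
on exactly half of `Δ_M` (translate by a unit vector), so each count contributes `0` or
`2^(|M|+|N|-1)` according to whether the vector vanishes on `M`. As `(α, β) ↦ (β, α + β)` is a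
bijection, the weights are the pairwise sums of a multiset with `2^(m-|M|)` zeros and all other
entries `2^(|M|+|N|-1)`. The codeword depends only on, and determines, the restrictions of `α` and
`β` to `M`, which gives the size `2^(2|M|)`.
-/
namespace Multiset

variable {α β γ : Type*}

theorem map_product_map (s : Multiset α) (t : Multiset β) (f : α → γ) (g : β → γ) :
    s.map f ×ˢ t.map g = (s ×ˢ t).map (Prod.map f g) := by
  induction s using Multiset.induction with
  | empty => simp
  | cons a s ih => simp [ih]

theorem replicate_product_replicate (a b : ℕ) (x : α) (y : β) :
    replicate a x ×ˢ replicate b y = replicate (a * b) (x, y) := by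
  refine eq_replicate.2 ⟨by simp, fun z hz => ?_⟩
  obtain ⟨h₁, h₂⟩ := mem_product.1 hz
  exact Prod.ext (eq_of_mem_replicate h₁) (eq_of_mem_replicate h₂)

theorem map_ite_eq_replicate_add_replicate (s : Multiset α) (p : α → Prop) [DecidablePred p]
    (b c : β) :
    s.map (fun x => if p x then b else c) =
      replicate (s.filter p).card b + replicate (s.filter (fun x => ¬ p x)).card c := by
  conv_lhs => rw [← filter_add_not (p := p) s, map_add]
  congr 1
  · exact (map_congr rfl fun x hx => if_pos (mem_filter.1 hx).2).trans (map_const' _ _)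
  · exact (map_congr rfl fun x hx => if_neg (mem_filter.1 hx).2).trans (map_const' _ _)

theorem map_add_product_self_replicate {M : Type*} [AddCommMonoid M] (p q : ℕ) (h : M) :
    ((replicate p 0 + replicate q h) ×ˢ (replicate p 0 + replicate q h)).map
        (fun x : M × M => x.1 + x.2) =
      replicate (q * q) (h + h) + replicate (2 * (p * q)) h + replicate (p * p) 0 := by
  simp only [add_product, product_add, replicate_product_replicate, map_add, map_replicate,
    add_zero, zero_add, Nat.two_mul, replicate_add, Nat.mul_comm q p]
  abel

theorem univ_val_map_shear {G M : Type*} [AddGroup G] [Fintype G] [AddCommMonoid M]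
    (F : G → M) :
    univ.val.map (fun v : G × G => F v.2 + F (v.1 + v.2)) =
      (univ.val.map F ×ˢ univ.val.map F).map (fun x => x.1 + x.2) := by
  let e : G × G ≃ G × G :=
    (Equiv.prodComm G G).trans (Equiv.prodShear (Equiv.refl G) Equiv.addRight)
  calc univ.val.map (fun v : G × G => F v.2 + F (v.1 + v.2))
      = (univ.val.map e).map (fun x => F x.1 + F x.2) := by rw [map_map]; rfl
    _ = (univ.val ×ˢ univ.val).map (fun x => F x.1 + F x.2) := by
      rw [map_univ_val_equiv, ← product_val, univ_product_univ]
    _ = _ := by rw [map_product_map, map_map]; rfl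

end Multiset

theorem hammingNorm_prod_eq_sum {ι κ β : Type*} [Fintype ι] [Fintype κ] [Zero β] [DecidableEq β]
    (f : ι × κ → β) : hammingNorm f = ∑ i, hammingNorm (fun j => f (i, j)) := by
  simp only [hammingNorm, card_filter, Fintype.sum_prod_type]

section DeltaComplex

variable {m : ℕ}

theorem mem_deltaC {M : Finset (Fin m)} {w : Fin m → ZMod 2} :
    w ∈ deltaC M ↔ ∀ i ∉ M, w i = 0 := by
  simp only [deltaC, mem_filter, mem_univ, true_and]
  exact forall_congr' fun i => not_imp_comm

theorem piecewise_mem_deltaC (M : Finset (Fin m)) (w : Fin m → ZMod 2) :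
    M.piecewise w 0 ∈ deltaC M :=
  mem_deltaC.2 fun i hi => by simp [hi]

theorem single_mem_deltaC {M : Finset (Fin m)} {i : Fin m} (hi : i ∈ M) :
    (Pi.single i 1 : Fin m → ZMod 2) ∈ deltaC M :=
  mem_deltaC.2 fun _ hj => Pi.single_eq_of_ne (ne_of_mem_of_not_mem hi hj).symm _

theorem add_mem_deltaC {M : Finset (Fin m)} {t s : Fin m → ZMod 2} (ht : t ∈ deltaC M)
    (hs : s ∈ deltaC M) : t + s ∈ deltaC M :=
  mem_deltaC.2 fun i hi => by simp [mem_deltaC.1 ht i hi, mem_deltaC.1 hs i hi]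

theorem card_deltaC (M : Finset (Fin m)) : (deltaC M).card = 2 ^ M.card := by
  suffices (deltaC M).card = Fintype.card (M → ZMod 2) by simpa
  refine card_bij' (fun w _ i => w i) (fun g _ i => if h : i ∈ M then g ⟨i, h⟩ else 0)
    (fun _ _ => mem_univ _) (fun g _ => mem_deltaC.2 fun i hi => by simp [hi])
    (fun w hw => funext fun i => ?_) (fun g _ => funext fun i => by simp)
  by_cases hi : i ∈ M
  · simp [hi]
  · simp [hi, mem_deltaC.1 hw i hi]

theorem card_filter_forall_mem_eq_zero (M : Finset (Fin m)) :
    (univ.filter fun γ : Fin m → ZMod 2 => ∀ i ∈ M, γ i = 0).card = 2 ^ (m - M.card) := by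
  have : (univ.filter fun γ : Fin m → ZMod 2 => ∀ i ∈ M, γ i = 0) = deltaC Mᶜ := by
    ext γ
    simp [mem_deltaC]
  rw [this, card_deltaC, card_compl, Fintype.card_fin]

theorem dotp_add_left (x y z : Fin m → ZMod 2) : dotp (x + y) z = dotp x z + dotp y z := by
  simp only [dotp, Pi.add_apply, add_mul, sum_add_distrib]

theorem dotp_add_right (x y z : Fin m → ZMod 2) : dotp x (y + z) = dotp x y + dotp x z := by
  simp only [dotp, Pi.add_apply, mul_add, sum_add_distrib]

theorem dotp_single (γ : Fin m → ZMod 2) (i : Fin m) : dotp γ (Pi.single i 1) = γ i := by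
  simp [dotp, Pi.single_apply]

theorem dotp_eq_of_eqOn {M : Finset (Fin m)} {γ γ' t : Fin m → ZMod 2}
    (h : ∀ i ∈ M, γ i = γ' i) (ht : t ∈ deltaC M) : dotp γ t = dotp γ' t := by
  refine sum_congr rfl fun i _ => ?_
  by_cases hi : i ∈ M
  · rw [h i hi]
  · simp [mem_deltaC.1 ht i hi]

theorem card_filter_dotp_eq_one (M : Finset (Fin m)) (γ : Fin m → ZMod 2) :
    ((deltaC M).filter fun t => dotp γ t = 1).card =
      if ∀ i ∈ M, γ i = 0 then 0 else 2 ^ (M.card - 1) := by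
  split_ifs with hγ
  · refine card_eq_zero.2 (filter_eq_empty_iff.2 fun t ht => ?_)
    rw [dotp_eq_of_eqOn (γ' := 0) hγ ht]
    simp [dotp]
  push Not at hγ
  obtain ⟨i, hi, hγi⟩ := hγ
  set e : Fin m → ZMod 2 := Pi.single i 1
  have hγe : dotp γ e = 1 := (dotp_single γ i).trans (Fin.eq_one_of_ne_zero _ hγi)
  have htrans : ∀ t ∈ deltaC M, t + e ∈ deltaC M := fun t ht =>
    add_mem_deltaC ht (single_mem_deltaC hi)
  have hflip : ∀ t, dotp γ (t + e) = 1 ↔ dotp γ t ≠ 1 := fun t => by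
    rw [dotp_add_right, hγe]; generalize dotp γ t = x; revert x; decide
  have hinv : ∀ t : Fin m → ZMod 2, t + e + e = t := fun t =>
    funext fun j => CharTwo.add_cancel_right (t j) (e j)
  have hhalf : ((deltaC M).filter fun t => dotp γ t = 1).card =
      ((deltaC M).filter fun t => dotp γ t ≠ 1).card :=
    card_bij' (fun t _ => t + e) (fun t _ => t + e)
      (fun t ht => by
        rw [mem_filter] at ht ⊢
        exact ⟨htrans t ht.1, fun h => (hflip t).1 h ht.2⟩)
      (fun t ht => by
        rw [mem_filter] at ht ⊢
        exact ⟨htrans t ht.1, (hflip t).2 ht.2⟩)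
      (fun t _ => hinv t) (fun t _ => hinv t)
  have htotal := card_filter_add_card_filter_not (s := deltaC M) (p := fun t => dotp γ t = 1)
  rw [card_deltaC, ← hhalf] at htotal
  have hM : M.card = M.card - 1 + 1 := (Nat.sub_add_cancel (card_pos.2 ⟨i, hi⟩)).symm
  rw [hM, pow_succ] at htotal
  omega

end DeltaComplex

theorem hammingNorm_grayPair (e : ZMod 2 × ZMod 2) :
    hammingNorm (grayPair e) = (if e.2 = 1 then 1 else 0) + if e.1 + e.2 = 1 then 1 else 0 := by
  revert e
  decide

section LeeWeight

variable {m : ℕ}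

theorem hammingNorm_gcwL (Ds : Finset ((Fin m → ZMod 2) × (Fin m → ZMod 2)))
    (v : (Fin m → ZMod 2) × (Fin m → ZMod 2)) :
    hammingNorm (gcwL Ds v) =
      (Ds.filter fun d => dotp v.2 d.1 = 1).card +
        (Ds.filter fun d => dotp (v.1 + v.2) d.1 = 1).card := by
  unfold gcwL
  rw [hammingNorm_prod_eq_sum, card_filter, card_filter, ← sum_add_distrib,
    ← sum_coe_sort Ds]
  simp only [hammingNorm_grayPair, cwL, dotp_add_left]

/-- The Lee weight carried by one Gray coordinate of `c^L_D(v)`, namely `γ ↦ (γ·t₁)_{(t₁, t₂) ∈ D}`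
for `γ = β` and for `γ = α + β`. -/
def componentWeight (M N : Finset (Fin m)) (γ : Fin m → ZMod 2) : ℕ :=
  if ∀ i ∈ M, γ i = 0 then 0 else 2 ^ (M.card + N.card - 1)

theorem card_filter_product_dotp_eq_one (M N : Finset (Fin m)) (γ : Fin m → ZMod 2) :
    ((deltaC M ×ˢ deltaC N).filter fun d => dotp γ d.1 = 1).card = componentWeight M N γ := by
  rw [filter_product_left (dotp γ · = 1), card_product, card_filter_dotp_eq_one, card_deltaC,
    componentWeight]
  split_ifs with hγ
  · exact zero_mul _
  · obtain ⟨i, hi, -⟩ := not_forall₂.1 hγ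
    have := card_pos.2 ⟨i, hi⟩
    rw [← pow_add]
    congr 1
    omega

theorem hammingNorm_gcwL_deltaC (M N : Finset (Fin m)) (v : (Fin m → ZMod 2) × (Fin m → ZMod 2)) :
    hammingNorm (gcwL (deltaC M ×ˢ deltaC N) v) =
      componentWeight M N v.2 + componentWeight M N (v.1 + v.2) := by
  rw [hammingNorm_gcwL, card_filter_product_dotp_eq_one, card_filter_product_dotp_eq_one]

end LeeWeight

section Code

variable {m : ℕ}

theorem cwL_deltaC_eq_iff (M N : Finset (Fin m)) {v w : (Fin m → ZMod 2) × (Fin m → ZMod 2)} :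
    cwL (deltaC M ×ˢ deltaC N) v = cwL (deltaC M ×ˢ deltaC N) w ↔
      ∀ i ∈ M, v.1 i = w.1 i ∧ v.2 i = w.2 i := by
  constructor
  · intro h i hi
    have hd : (Pi.single i 1, 0) ∈ deltaC M ×ˢ deltaC N :=
      mem_product.2 ⟨single_mem_deltaC hi, mem_deltaC.2 fun _ _ => rfl⟩
    simpa only [cwL, dotp_single, Prod.mk.injEq] using congrFun h ⟨_, hd⟩
  · intro h
    funext d
    have hd := (mem_product.1 d.2).1
    exact Prod.ext (dotp_eq_of_eqOn (fun i hi => (h i hi).1) hd)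
      (dotp_eq_of_eqOn (fun i hi => (h i hi).2) hd)

theorem card_image_cwL_deltaC (M N : Finset (Fin m)) :
    (univ.image (cwL (deltaC M ×ˢ deltaC N))).card = 2 ^ (2 * M.card) := by
  set cw := cwL (deltaC M ×ˢ deltaC N)
  have hproj : univ.image cw = (deltaC M ×ˢ deltaC M).image cw := by
    refine Subset.antisymm (fun y hy => ?_) (image_subset_image (subset_univ _))
    obtain ⟨v, -, rfl⟩ := mem_image.1 hy
    refine mem_image.2 ⟨(M.piecewise v.1 0, M.piecewise v.2 0),
      mem_product.2 ⟨piecewise_mem_deltaC M _, piecewise_mem_deltaC M _⟩, ?_⟩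
    exact (cwL_deltaC_eq_iff M N).2 fun i hi => by simp [hi]
  have hinj : Set.InjOn cw (deltaC M ×ˢ deltaC M : Finset _) := by
    intro v hv w hw hvw
    obtain ⟨hv₁, hv₂⟩ := mem_product.1 hv
    obtain ⟨hw₁, hw₂⟩ := mem_product.1 hw
    have hM := (cwL_deltaC_eq_iff M N).1 hvw
    refine Prod.ext (funext fun i => ?_) (funext fun i => ?_) <;> by_cases hi : i ∈ M
    · exact (hM i hi).1
    · rw [mem_deltaC.1 hv₁ i hi, mem_deltaC.1 hw₁ i hi]
    · exact (hM i hi).2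
    · rw [mem_deltaC.1 hv₂ i hi, mem_deltaC.1 hw₂ i hi]
  rw [hproj, card_image_of_injOn hinj, card_product, card_deltaC, two_mul, pow_add]

theorem map_univ_componentWeight (M N : Finset (Fin m)) :
    univ.val.map (componentWeight M N) =
      Multiset.replicate (2 ^ (m - M.card)) 0 +
        Multiset.replicate (2 ^ (m - M.card) * (2 ^ M.card - 1)) (2 ^ (M.card + N.card - 1)) := by
  have hzero := card_filter_forall_mem_eq_zero M
  have htotal := card_filter_add_card_filter_not (s := univ)
    (p := fun γ : Fin m → ZMod 2 => ∀ i ∈ M, γ i = 0)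
  have hsplit : 2 ^ m = 2 ^ (m - M.card) * 2 ^ M.card := by
    rw [← pow_add, Nat.sub_add_cancel (by simpa using card_le_univ M)]
  rw [card_univ, Fintype.card_fun, ZMod.card, Fintype.card_fin, hzero, hsplit] at htotal
  unfold componentWeight
  rw [Multiset.map_ite_eq_replicate_add_replicate, ← filter_val, ← filter_val, card_val,
    card_val, hzero, Nat.mul_sub_one]
  congr 2
  omega

end Code

theorem map_univ_hammingNorm_gcwL_deltaC {m : ℕ} (M N : Finset (Fin m)) :
    univ.val.map (fun v => hammingNorm (gcwL (deltaC M ×ˢ deltaC N) v)) =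
      Multiset.replicate (2 ^ (2 * m - 2 * M.card) * (2 ^ M.card - 1) ^ 2)
          (2 ^ (M.card + N.card)) +
      Multiset.replicate (2 ^ (2 * m - 2 * M.card + 1) * (2 ^ M.card - 1))
          (2 ^ (M.card + N.card - 1)) +
      Multiset.replicate (2 ^ (2 * m - 2 * M.card)) 0 := by
  simp only [hammingNorm_gcwL_deltaC]
  rw [Multiset.univ_val_map_shear, map_univ_componentWeight,
    Multiset.map_add_product_self_replicate]
  have hexp : 2 * m - 2 * M.card = 2 * (m - M.card) := by omega
  rw [hexp, pow_succ 2 (2 * _), pow_mul']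
  congr 2
  · rcases Nat.eq_zero_or_pos M.card with hM | hM
    · simp [hM]
    · rw [← two_mul, ← pow_succ', Nat.sub_add_cancel (by omega : 1 ≤ M.card + N.card)]
      congr 1
      ring
  · congr 1
    ring
  · ring

theorem stmt_0_general {m : ℕ} (M N : Finset (Fin m))
    (Ds : Finset ((Fin m → ZMod 2) × (Fin m → ZMod 2)))
    (hDs : Ds = deltaC M ×ˢ deltaC N) :
    Ds.card = 2 ^ (M.card + N.card) ∧
    ((Finset.univ : Finset ((Fin m → ZMod 2) × (Fin m → ZMod 2))).image (cwL Ds)).card = 2 ^ (2 * M.card) ∧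
    (Finset.univ : Finset ((Fin m → ZMod 2) × (Fin m → ZMod 2))).val.map (fun v => hammingNorm (gcwL Ds v)) =
      Multiset.replicate (2 ^ (2 * m - 2 * M.card) * (2 ^ M.card - 1) ^ 2)
          (2 ^ (M.card + N.card)) +
      Multiset.replicate (2 ^ (2 * m - 2 * M.card + 1) * (2 ^ M.card - 1))
          (2 ^ (M.card + N.card - 1)) +
      Multiset.replicate (2 ^ (2 * m - 2 * M.card))
          (0) := by
  subst hDs
  refine ⟨?_, card_image_cwL_deltaC M N, map_univ_hammingNorm_gcwL_deltaC M N⟩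
  rw [card_product, card_deltaC, card_deltaC, pow_add]

theorem stmt_0 {m : ℕ} (hm : 1 ≤ m) (M N : Finset (Fin m))
    (hMN : 1 ≤ M.card + N.card)
    (Ds : Finset ((Fin m → ZMod 2) × (Fin m → ZMod 2)))
    (hDs : Ds = deltaC M ×ˢ deltaC N) :
    Ds.card = 2 ^ (M.card + N.card) ∧
    ((Finset.univ : Finset ((Fin m → ZMod 2) × (Fin m → ZMod 2))).image (cwL Ds)).card = 2 ^ (2 * M.card) ∧
    (Finset.univ : Finset ((Fin m → ZMod 2) × (Fin m → ZMod 2))).val.map (fun v => hammingNorm (gcwL Ds v)) =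
      Multiset.replicate (2 ^ (2 * m - 2 * M.card) * (2 ^ M.card - 1) ^ 2)
          (2 ^ (M.card + N.card)) +
      Multiset.replicate (2 ^ (2 * m - 2 * M.card + 1) * (2 ^ M.card - 1))
          (2 ^ (M.card + N.card - 1)) +
      Multiset.replicate (2 ^ (2 * m - 2 * M.card))
          (0) :=
  stmt_0_general M N Ds hDs
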